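/- There exists a₀ > 0 such that for every real a with 0 < a < a₀ and every integer m ≥ 1 satisfying the Markov condition (s₁ + 2rs₁a)^m = 1/(4r²s₂²a²), there exists a real number λ with (1 − 2ra)/(1 + 2ra) < λ < 1/(1 + 2ra) such that φ(λ) = 1, where φ(λ) = λ^m · s₁^(m−1) · s₂ · (1+2ra)^m · (λ(1+2ra) − 1) · (s₂(2λ−1)(λ s₁(1+2ra) − 1) − s₁). -/

import Mathlib

/-!
Write ε = 2ra. At l = 1/(1+ε) the factor l(1+ε) - 1 vanishes, so φ = 0 there. At
l = (1-ε)/(1+ε), using s₁s₂ = s₁ + s₂, φ factors through (s₁(1+ε))^m (s₂ε)², which the Markov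
condition makes 1, leaving ((1-ε)/(1+ε))^m (s₂+4-3s₂ε)/(s₂(1+ε)). The Markov condition also gives
s₁^m ≤ ε⁻², i.e. m ≤ 2 log(1/ε)/log s₁, so by Bernoulli ((1-ε)/(1+ε))^m ≥ 1 - 2mε → 1 as ε → 0
(because ε log ε → 0). Hence φ at the left endpoint tends to (s₂+4)/s₂ > 1, and the intermediate
value theorem produces the root.
-/

/-- The auxiliary function φ from the paper. -/
noncomputable def phi (s₁ s₂ r a : ℝ) (m : ℕ) (l : ℝ) : ℝ :=
  l ^ m * s₁ ^ (m - 1) * s₂ * (1 + 2 * r * a) ^ m * (l * (1 + 2 * r * a) - 1) *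
    (s₂ * (2 * l - 1) * (l * s₁ * (1 + 2 * r * a) - 1) - s₁)

open Real Filter Topology Set

lemma phi_one_div_one_add_eq_zero (s₁ s₂ r a : ℝ) (m : ℕ) (h : 1 + 2 * r * a ≠ 0) :
    phi s₁ s₂ r a m (1 / (1 + 2 * r * a)) = 0 := by
  simp [phi, h]

lemma phi_one_sub_div_one_add_eq {s₁ s₂ r a : ℝ} {m : ℕ} (hm : 1 ≤ m) (hs : s₁ * s₂ = s₁ + s₂)
    (hs₂ : s₂ ≠ 0) (h : 1 + 2 * r * a ≠ 0) :
    phi s₁ s₂ r a m ((1 - 2 * r * a) / (1 + 2 * r * a)) =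
      ((1 - 2 * r * a) / (1 + 2 * r * a)) ^ m *
        ((s₁ * (1 + 2 * r * a)) ^ m * (s₂ * (2 * r * a)) ^ 2) *
        (s₂ + 4 - 3 * s₂ * (2 * r * a)) / (s₂ * (1 + 2 * r * a)) := by
  obtain ⟨k, rfl⟩ := Nat.exists_eq_add_of_le' hm
  rw [phi, Nat.add_sub_cancel]
  generalize 2 * r * a = ε at h ⊢
  have hl : (1 - ε) / (1 + ε) * (1 + ε) = 1 - ε := div_mul_cancel₀ _ h
  have hsecond :
      s₂ * (2 * ((1 - ε) / (1 + ε)) - 1) * ((1 - ε) / (1 + ε) * s₁ * (1 + ε) - 1) - s₁ =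
        s₁ * ε * (3 * s₂ * ε - s₂ - 4) / (1 + ε) := by
    field_simp; linear_combination (1 - 3 * ε) * hs
  rw [hsecond, hl, mul_pow s₁]
  field_simp
  ring

lemma one_sub_two_mul_le_div_pow {ε : ℝ} (h₀ : 0 ≤ ε) (h₁ : ε ≤ 1 / 2) (m : ℕ) :
    1 - 2 * m * ε ≤ ((1 - ε) / (1 + ε)) ^ m :=
  calc 1 - 2 * m * ε = 1 + m * (-2 * ε) := by ring
    _ ≤ (1 + -2 * ε) ^ m := one_add_mul_le_pow (by linarith) m
    _ ≤ ((1 - ε) / (1 + ε)) ^ m := by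
      refine pow_le_pow_left₀ (by linarith) ?_ m
      rw [le_div_iff₀ (by linarith)]
      nlinarith

lemma natCast_mul_log_le_of_pow_mul_sq_eq_one {s₁ s₂ ε : ℝ} {m : ℕ} (hs₁ : 0 < s₁)
    (hs₂ : 1 ≤ s₂) (hε : 0 < ε) (h : (s₁ * (1 + ε)) ^ m * (s₂ * ε) ^ 2 = 1) :
    m * log s₁ ≤ -2 * log ε := by
  have hle : s₁ ^ m * ε ^ 2 ≤ 1 := h ▸ by
    rw [mul_pow, mul_pow s₂]
    gcongr
    · exact le_mul_of_one_le_right (by positivity) (one_le_pow₀ (by linarith))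
    · exact le_mul_of_one_le_left (by positivity) (one_le_pow₀ hs₂)
  have := log_nonpos (by positivity) hle
  rw [log_mul (by positivity) (by positivity), log_pow, log_pow] at this
  push_cast at this
  linarith

lemma eventually_lt_div_pow_mul {s₁ s₂ : ℝ} (hs₁ : 1 < s₁) (hs₂ : 0 ≤ s₂) :
    ∀ᶠ ε in 𝓝[>] (0 : ℝ), ∀ m : ℕ, m * log s₁ ≤ -2 * log ε →
      s₂ * (1 + ε) < ((1 - ε) / (1 + ε)) ^ m * (s₂ + 4 - 3 * s₂ * ε) := by
  have hlog : 0 < log s₁ := log_pos hs₁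
  have hF : Tendsto
      (fun ε ↦ (1 + 4 * (ε * log ε) / log s₁) * (s₂ + 4 - 3 * s₂ * ε) - s₂ * (1 + ε))
      (𝓝[>] 0) (𝓝 4) := by
    have : Continuous fun ε ↦
        (1 + 4 * (ε * log ε) / log s₁) * (s₂ + 4 - 3 * s₂ * ε) - s₂ * (1 + ε) := by
      have := continuous_mul_log
      fun_prop
    simpa using (this.tendsto 0).mono_left nhdsWithin_le_nhds
  have hC : Tendsto (fun ε ↦ s₂ + 4 - 3 * s₂ * ε) (𝓝[>] 0) (𝓝 (s₂ + 4)) := by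
    have : Continuous fun ε : ℝ ↦ s₂ + 4 - 3 * s₂ * ε := by fun_prop
    simpa using (this.tendsto 0).mono_left nhdsWithin_le_nhds
  filter_upwards [hF.eventually_const_lt (by norm_num : (0 : ℝ) < 4),
    hC.eventually_const_lt (by linarith : (0 : ℝ) < s₂ + 4),
    Ioo_mem_nhdsGT (by norm_num : (0 : ℝ) < 1 / 2)]
    with ε hFε hCε hε m hm
  have hmε : 4 * (ε * log ε) / log s₁ ≤ -(2 * m * ε) := by
    rw [div_le_iff₀ hlog]
    nlinarith [hε.1]
  have := one_sub_two_mul_le_div_pow hε.1.le hε.2.le m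
  nlinarith

theorem stmt_0 (s₁ s₂ r : ℝ) (hs₁ : 1 < s₁) (hs₂ : 1 < s₂)
    (hsum : 1 / s₁ + 1 / s₂ = 1) (hr : 0 < r) :
    ∃ a₀ > 0, ∀ a : ℝ, 0 < a → a < a₀ → ∀ m : ℕ, 1 ≤ m →
      (s₁ + 2 * r * s₁ * a) ^ m = 1 / (4 * r ^ 2 * s₂ ^ 2 * a ^ 2) →
      ∃ l : ℝ, (1 - 2 * r * a) / (1 + 2 * r * a) < l ∧ l < 1 / (1 + 2 * r * a) ∧
        phi s₁ s₂ r a m l = 1 := by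
  have hs₂₀ : 0 < s₂ := by linarith
  have hs : s₁ * s₂ = s₁ + s₂ := by field_simp at hsum; linarith
  obtain ⟨δ, hδ : 0 < δ, hsub⟩ :=
    mem_nhdsGT_iff_exists_Ioo_subset.mp (eventually_lt_div_pow_mul hs₁ hs₂₀.le)
  refine ⟨δ / (2 * r), by positivity, fun a ha haδ m hm hM ↦ ?_⟩
  have hε : 2 * r * a ∈ Ioo 0 δ := ⟨by positivity, by rwa [lt_div_iff₀' (by positivity)] at haδ⟩
  have hmarkov : (s₁ * (1 + 2 * r * a)) ^ m * (s₂ * (2 * r * a)) ^ 2 = 1 := by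
    rw [show s₁ * (1 + 2 * r * a) = s₁ + 2 * r * s₁ * a by ring, hM]
    field_simp
    ring
  have hleft : 1 < phi s₁ s₂ r a m ((1 - 2 * r * a) / (1 + 2 * r * a)) := by
    rw [phi_one_sub_div_one_add_eq hm hs hs₂₀.ne' (by positivity), hmarkov, mul_one,
      one_lt_div (by positivity)]
    exact hsub hε m (natCast_mul_log_le_of_pow_mul_sq_eq_one (by positivity) hs₂.le hε.1 hmarkov)
  have hright : phi s₁ s₂ r a m (1 / (1 + 2 * r * a)) = 0 :=
    phi_one_div_one_add_eq_zero _ _ _ _ _ (by positivity)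
  have hcont : Continuous (phi s₁ s₂ r a m) := by unfold phi; fun_prop
  obtain ⟨l, hl, hφ⟩ := intermediate_value_Ioo' (by gcongr; linarith [hε.1]) hcont.continuousOn
    (show (1 : ℝ) ∈ Ioo (phi s₁ s₂ r a m (1 / (1 + 2 * r * a))) _ from
      ⟨hright ▸ one_pos, hleft⟩)
  exact ⟨l, hl.1, hl.2, hφ⟩
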